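/- Let X be a separable Hilbert space, μ₀, μ₁ ∈ P₂(X), Φ₀ a probability on X×X with finite second moments and first marginal μ₀, Φ₁ with first marginal μ₁. Then for every t > 0 and every coupling Θ of Φ₀ and Φ₁ whose (x₀,x₁)-marginal is an optimal plan between μ₀ and μ₁: W₂²(exp^t_♯Φ₀, exp^t_♯Φ₁) ≤ W₂²(μ₀, μ₁) + 2t ∫⟨x₀−x₁, v₀−v₁⟩ dΘ + t² ∫|v₀−v₁|² dΘ. -/

import Mathlib

open MeasureTheory Filter Topology
open scoped RealInnerProductSpace ENNReal

noncomputable section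

/-- `γ` is a coupling of `μ` and `ν` if its marginals are `μ` and `ν`. -/
def IsCoupling {α β : Type*} [MeasurableSpace α] [MeasurableSpace β]
    (γ : MeasureTheory.Measure (α × β)) (μ : MeasureTheory.Measure α)
    (ν : MeasureTheory.Measure β) : Prop :=
  γ.map Prod.fst = μ ∧ γ.map Prod.snd = ν

variable {X : Type*} [NormedAddCommGroup X] [InnerProductSpace ℝ X]
  [MeasurableSpace X] [BorelSpace X]

/-- The squared 2-Wasserstein distance, as the infimum of transport costs over couplings. -/
def W2sq (μ ν : Measure X) : ℝ :=
  sInf {c : ℝ | ∃ γ : Measure (X × X), IsProbabilityMeasure γ ∧ IsCoupling γ μ ν ∧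
    c = ∫ p, ‖p.1 - p.2‖ ^ 2 ∂γ}

/-- The 2-Wasserstein distance. -/
def W2 (μ ν : Measure X) : ℝ := Real.sqrt (W2sq μ ν)

/-- The exponential map `exp^t(x,v) = x + t v` on the tangent bundle `X × X`. -/
def expMap (t : ℝ) : X × X → X := fun p => p.1 + t • p.2

/-- A measure has finite second moment if `‖x‖²` is integrable. -/
def FiniteSecondMoment (μ : Measure X) : Prop := Integrable (fun x => ‖x‖ ^ 2) μ

namespace MeasureTheory

section InnerProductSpace

variable {α : Type*} [MeasurableSpace α] {μ : Measure α}
  {E : Type*} [NormedAddCommGroup E] [InnerProductSpace ℝ E]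

theorem MemLp.integrable_inner {f g : α → E} (hf : MemLp f 2 μ) (hg : MemLp g 2 μ) :
    Integrable (fun x => ⟪f x, g x⟫) μ :=
  (L2.integrable_inner (𝕜 := ℝ) (hf.toLp f) (hg.toLp g)).congr <| by
    filter_upwards [hf.coeFn_toLp, hg.coeFn_toLp] with x hfx hgx
    rw [hfx, hgx]

theorem integral_norm_add_smul_sq {f g : α → E} (hf : MemLp f 2 μ) (hg : MemLp g 2 μ) (t : ℝ) :
    ∫ x, ‖f x + t • g x‖ ^ 2 ∂μ =
      ∫ x, ‖f x‖ ^ 2 ∂μ + 2 * t * ∫ x, ⟪f x, g x⟫ ∂μ + t ^ 2 * ∫ x, ‖g x‖ ^ 2 ∂μ := by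
  have hf2 : Integrable (fun x => ‖f x‖ ^ 2) μ := hf.integrable_norm_pow two_ne_zero
  have hg2 : Integrable (fun x => t ^ 2 * ‖g x‖ ^ 2) μ :=
    (hg.integrable_norm_pow two_ne_zero).const_mul _
  have hfg : Integrable (fun x => 2 * t * ⟪f x, g x⟫) μ := (hf.integrable_inner hg).const_mul _
  have hf2fg : Integrable (fun x => ‖f x‖ ^ 2 + 2 * t * ⟪f x, g x⟫) μ := hf2.add hfg
  have hexpand : ∀ x, ‖f x + t • g x‖ ^ 2 =
      ‖f x‖ ^ 2 + 2 * t * ⟪f x, g x⟫ + t ^ 2 * ‖g x‖ ^ 2 := fun x => by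
    rw [norm_add_sq_real, real_inner_smul_right, norm_smul, mul_pow, Real.norm_eq_abs, sq_abs]
    ring
  simp_rw [hexpand]
  rw [integral_add hf2fg hg2, integral_add hf2 hfg, integral_const_mul, integral_const_mul]

end InnerProductSpace

theorem memLp_two_id_of_integrable_sq_norm_add {E F : Type*}
    [NormedAddCommGroup E] [MeasurableSpace E] [OpensMeasurableSpace E] [SecondCountableTopology E]
    [NormedAddCommGroup F] [MeasurableSpace F] [OpensMeasurableSpace F] [SecondCountableTopology F]
    {μ : Measure (E × F)} (h : Integrable (fun p : E × F => ‖p.1‖ ^ 2 + ‖p.2‖ ^ 2) μ) :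
    MemLp id 2 μ := by
  refine memLp_prod_iff.2 ⟨?_, ?_⟩
  · refine (memLp_two_iff_integrable_sq_norm measurable_fst.aestronglyMeasurable).2 <|
      h.mono' (by fun_prop) (ae_of_all _ fun p => ?_)
    simp only [norm_pow, norm_norm]
    nlinarith [sq_nonneg ‖p.2‖]
  · refine (memLp_two_iff_integrable_sq_norm measurable_snd.aestronglyMeasurable).2 <|
      h.mono' (by fun_prop) (ae_of_all _ fun p => ?_)
    simp only [norm_pow, norm_norm]
    nlinarith [sq_nonneg ‖p.1‖]

end MeasureTheory

section Coupling

variable {α β γ δ : Type*} [MeasurableSpace α] [MeasurableSpace β] [MeasurableSpace γ]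
  [MeasurableSpace δ] {π : Measure (α × β)} {μ : Measure α} {ν : Measure β}

theorem IsCoupling.map (h : IsCoupling π μ ν) {f : α → γ} {g : β → δ} (hf : Measurable f)
    (hg : Measurable g) : IsCoupling (π.map (Prod.map f g)) (μ.map f) (ν.map g) := by
  constructor
  · rw [Measure.map_map measurable_fst (hf.prodMap hg), ← h.1,
      Measure.map_map hf measurable_fst]
    rfl
  · rw [Measure.map_map measurable_snd (hf.prodMap hg), ← h.2,
      Measure.map_map hg measurable_snd]
    rfl

end Coupling

theorem W2sq_le_integral {E : Type*} [NormedAddCommGroup E] [MeasurableSpace E]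
    {μ ν : Measure E} {π : Measure (E × E)} [IsProbabilityMeasure π]
    (h : IsCoupling π μ ν) : W2sq μ ν ≤ ∫ p, ‖p.1 - p.2‖ ^ 2 ∂π :=
  csInf_le ⟨0, by rintro c ⟨γ, -, -, rfl⟩; positivity⟩ ⟨π, inferInstance, h, rfl⟩

theorem W2sq_expMap_le_general
    [SecondCountableTopology X]
    (μ₀ μ₁ : Measure X) (Φ₀ Φ₁ : Measure (X × X))
    (hi0 : Integrable (fun p : X × X => ‖p.1‖ ^ 2 + ‖p.2‖ ^ 2) Φ₀)
    (hi1 : Integrable (fun p : X × X => ‖p.1‖ ^ 2 + ‖p.2‖ ^ 2) Φ₁)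
    (Θ : Measure ((X × X) × (X × X))) (hΘp : IsProbabilityMeasure Θ)
    (hΘc : IsCoupling Θ Φ₀ Φ₁)
    (hopt : ∫ q, ‖q.1.1 - q.2.1‖ ^ 2 ∂Θ = W2sq μ₀ μ₁)
    (t : ℝ) :
    W2sq (Φ₀.map (expMap t)) (Φ₁.map (expMap t)) ≤
      W2sq μ₀ μ₁ + 2 * t * ∫ q, ⟪q.1.1 - q.2.1, q.1.2 - q.2.2⟫ ∂Θ +
        t ^ 2 * ∫ q, ‖q.1.2 - q.2.2‖ ^ 2 ∂Θ := by
  have hexp : Measurable (expMap t : X × X → X) := by unfold expMap; fun_prop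
  have hΘ₀ : MemLp Prod.fst 2 Θ :=
    (hΘc.1 ▸ memLp_two_id_of_integrable_sq_norm_add hi0).comp_of_map measurable_fst.aemeasurable
  have hΘ₁ : MemLp Prod.snd 2 Θ :=
    (hΘc.2 ▸ memLp_two_id_of_integrable_sq_norm_add hi1).comp_of_map measurable_snd.aemeasurable
  have hdiff : MemLp (fun q => q.1 - q.2) 2 Θ := hΘ₀.sub hΘ₁
  have := Measure.isProbabilityMeasure_map (μ := Θ) (hexp.prodMap hexp).aemeasurable
  calc W2sq (Φ₀.map (expMap t)) (Φ₁.map (expMap t))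
      ≤ ∫ p, ‖p.1 - p.2‖ ^ 2 ∂Θ.map (Prod.map (expMap t) (expMap t)) :=
        W2sq_le_integral (hΘc.map hexp hexp)
    _ = ∫ q, ‖(q.1.1 - q.2.1) + t • (q.1.2 - q.2.2)‖ ^ 2 ∂Θ := by
        rw [integral_map (hexp.prodMap hexp).aemeasurable (by fun_prop)]
        congr 1 with q
        simp only [Prod.map, expMap, smul_sub]
        abel_nf
    _ = _ := by
        rw [← hopt]
        exact integral_norm_add_smul_sq hdiff.fst hdiff.snd t

/-- Expansion of the squared Wasserstein distance along a single exponential step: for a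
coupling `Θ` of `Φ₀, Φ₁` whose position marginal is optimal,
`W₂²(exp^t_♯Φ₀, exp^t_♯Φ₁) ≤ W₂²(μ₀,μ₁) + 2t∫⟨x₀-x₁, v₀-v₁⟩dΘ + t²∫|v₀-v₁|²dΘ`. -/
theorem W2sq_expMap_le
    [CompleteSpace X] [SecondCountableTopology X]
    (μ₀ μ₁ : Measure X) (Φ₀ Φ₁ : Measure (X × X))
    (hμ₀ : IsProbabilityMeasure μ₀) (hμ₁ : IsProbabilityMeasure μ₁)
    (h0 : IsProbabilityMeasure Φ₀) (h1 : IsProbabilityMeasure Φ₁)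
    (hm0 : Φ₀.map Prod.fst = μ₀) (hm1 : Φ₁.map Prod.fst = μ₁)
    (hi0 : Integrable (fun p : X × X => ‖p.1‖ ^ 2 + ‖p.2‖ ^ 2) Φ₀)
    (hi1 : Integrable (fun p : X × X => ‖p.1‖ ^ 2 + ‖p.2‖ ^ 2) Φ₁)
    (Θ : Measure ((X × X) × (X × X))) (hΘp : IsProbabilityMeasure Θ)
    (hΘc : IsCoupling Θ Φ₀ Φ₁)
    (hopt : ∫ q, ‖q.1.1 - q.2.1‖ ^ 2 ∂Θ = W2sq μ₀ μ₁)
    (t : ℝ) (ht : 0 < t) :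
    W2sq (Φ₀.map (expMap t)) (Φ₁.map (expMap t)) ≤
      W2sq μ₀ μ₁ + 2 * t * ∫ q, ⟪q.1.1 - q.2.1, q.1.2 - q.2.2⟫ ∂Θ +
        t ^ 2 * ∫ q, ‖q.1.2 - q.2.2‖ ^ 2 ∂Θ :=
  W2sq_expMap_le_general μ₀ μ₁ Φ₀ Φ₁ hi0 hi1 Θ hΘp hΘc hopt t
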